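/- Let n ≥ 3 and let C_n be the cycle on n vertices. Then χ_{vi,1}(C_n) = 6 if n = 3; χ_{vi,1}(C_n) = 4 if n ≡ 0 (mod 4); and χ_{vi,1}(C_n) = 5 otherwise. -/

import Mathlib

open SimpleGraph

variable {V : Type*}

/-- An *incidence* of `G`: a pair `(v, e)` where `e` is an edge of `G` and `v ∈ e`. -/
abbrev Inc (G : SimpleGraph V) : Type _ :=
  {p : V × Sym2 V // p.2 ∈ G.edgeSet ∧ p.1 ∈ p.2}

/-- The elements to be colored in a vi-simultaneous coloring: vertices together with
incidences. -/
abbrev VIElem (G : SimpleGraph V) : Type _ := V ⊕ Inc G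

/-- Adjacency between elements of `V(G) ∪ I(G)`: two vertices are adjacent when they are
adjacent in `G`; a vertex `u` and an incidence `(w, f)` are adjacent when `u ∈ f`; two
distinct incidences `(v, e)`, `(w, f)` are adjacent when `v = w`, or `e = f`, or
`{v, w} = e`, or `{v, w} = f`. -/
def VIAdj (G : SimpleGraph V) : VIElem G → VIElem G → Prop
  | Sum.inl u, Sum.inl w => G.Adj u w
  | Sum.inl u, Sum.inr i => u ∈ i.1.2
  | Sum.inr i, Sum.inl u => u ∈ i.1.2
  | Sum.inr i, Sum.inr j => i ≠ j ∧
      (i.1.1 = j.1.1 ∨ i.1.2 = j.1.2 ∨ s(i.1.1, j.1.1) = i.1.2 ∨ s(i.1.1, j.1.1) = j.1.2)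

/-- A vi-simultaneous proper `k`-coloring of `G`: adjacent or incident elements of
`V(G) ∪ I(G)` receive distinct colors. -/
def IsVIColoring (G : SimpleGraph V) {k : ℕ} (c : VIElem G → Fin k) : Prop :=
  ∀ a b, VIAdj G a b → c a ≠ c b

/-- The vi-simultaneous chromatic number `χ_vi(G)`: the least `k` admitting a
vi-simultaneous proper `k`-coloring. -/
noncomputable def chiVI (G : SimpleGraph V) : ℕ :=
  sInf {k | ∃ c : VIElem G → Fin k, IsVIColoring G c}

/-- `I₂(v)`: the set of second incidences of a vertex `v`, i.e. incidences `(u, e)` with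
`e = {u, v}` and `u ≠ v`. -/
def I2 (G : SimpleGraph V) (v : V) : Set (Inc G) :=
  {i | i.1.1 ≠ v ∧ i.1.2 = s(i.1.1, v)}

/-- A vi-simultaneous `(k, s)`-coloring: a vi-simultaneous proper `k`-coloring in which at
most `s` distinct colors appear on `I₂(v)` for every vertex `v`. -/
def IsVISColoring (G : SimpleGraph V) (s : ℕ) {k : ℕ} (c : VIElem G → Fin k) : Prop :=
  IsVIColoring G c ∧ ∀ v : V, ((fun i => c (Sum.inr i)) '' I2 G v).ncard ≤ s

/-- `χ_{vi,s}(G)`: the least `k` admitting a vi-simultaneous `(k, s)`-coloring. -/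
noncomputable def chiVIS (G : SimpleGraph V) (s : ℕ) : ℕ :=
  sInf {k | ∃ c : VIElem G → Fin k, IsVISColoring G s c}

/-- The maximum degree `Δ(G)` of a finite graph. -/
noncomputable def maxDeg [Fintype V] (G : SimpleGraph V) : ℕ :=
  Finset.univ.sup fun v => (G.neighborSet v).ncard

/-!
Without isolated vertices, a vi-simultaneous `(k, 1)`-coloring is the same as a vertex coloring
`a` together with one color `f v` for each set `I₂(v)`, subject to local constraints; on `C_n`
they say that `a` is proper and `f v, f (v + 1), f (v + 2), a (v + 1)` are distinct. Hence at
least four colors are needed, and six for `C_3`, where all six colors are forced to differ. With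
four colors `a (v + 1)` is the color missing from `f v, f (v + 1), f (v + 2)`, and properness of
`a` makes `f` periodic with period `4`, which forces `4 ∣ n`. Conversely, if `f` gives distinct
colors to any four consecutive vertices, `a v = f (v + 2)` completes it: take `i mod 4` when
`4 ∣ n`, and with five colors blocks `0123` followed by `n % 4` blocks `01234`, except for
`n = 6, 7, 11`, which get explicit colorings.
-/

namespace Inc

variable {G : SimpleGraph V}

noncomputable def other (i : Inc G) : V := Sym2.Mem.other i.2.2

lemma edge_eq (i : Inc G) : i.1.2 = s(i.1.1, i.other) := (Sym2.other_spec _).symm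

lemma adj_other (i : Inc G) : G.Adj i.1.1 i.other := by
  have h := i.2.1
  rwa [edge_eq, mem_edgeSet] at h

lemma ext_of_other_eq {i j : Inc G} (h : i.1.1 = j.1.1) (h' : i.other = j.other) : i = j :=
  Subtype.ext (Prod.ext h (by rw [edge_eq, edge_eq j, h, h']))

lemma other_eq_iff {i : Inc G} {u : V} : i.other = u ↔ i.1.2 = s(i.1.1, u) := by
  rw [← Sym2.congr_right (a := i.1.1), ← edge_eq]

lemma mem_I2_iff {i : Inc G} {v : V} : i ∈ I2 G v ↔ i.other = v := by
  refine ⟨fun h => other_eq_iff.2 h.2, fun h => ⟨?_, other_eq_iff.1 h⟩⟩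
  rw [← h]
  exact i.adj_other.ne

def ofAdj {u w : V} (h : G.Adj u w) : Inc G := ⟨(u, s(u, w)), h, Sym2.mem_mk_left u w⟩

@[simp]
lemma other_ofAdj {u w : V} (h : G.Adj u w) : (ofAdj h).other = w :=
  other_eq_iff.2 rfl

end Inc

section OneColoring

variable {G : SimpleGraph V} {k : ℕ}

/-- `f v` is the single color that a vi-simultaneous `(k, 1)`-coloring puts on `I₂(v)`. -/
noncomputable def viColoringOf (a f : V → Fin k) : VIElem G → Fin k :=
  Sum.elim a fun i => f i.other

structure IsVIOnePair (G : SimpleGraph V) (a f : V → Fin k) : Prop where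
  vertex_ne : ∀ ⦃u w⦄, G.Adj u w → a u ≠ a w
  second_ne : ∀ ⦃u w⦄, G.Adj u w → f u ≠ f w
  second_ne_of_common_adj : ∀ ⦃x u w⦄, G.Adj x u → G.Adj x w → u ≠ w → f u ≠ f w
  vertex_ne_second : ∀ ⦃u w⦄, G.Adj u w → a u ≠ f w ∧ a w ≠ f w

lemma isVIColoring_viColoringOf {a f : V → Fin k} (h : IsVIOnePair G a f) :
    IsVIColoring G (viColoringOf a f) := by
  have vertex_inc : ∀ (u : V) (i : Inc G), u ∈ i.1.2 → a u ≠ f i.other := by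
    intro u i hu
    rw [i.edge_eq, Sym2.mem_iff] at hu
    rcases hu with rfl | rfl
    exacts [(h.vertex_ne_second i.adj_other).1, (h.vertex_ne_second i.adj_other).2]
  rintro (u | i) (w | j) hadj
  · exact h.vertex_ne hadj
  · exact vertex_inc u j hadj
  · exact (vertex_inc w i hadj).symm
  · show f i.other ≠ f j.other
    obtain ⟨hij, hsame | hedge | hi | hj⟩ := hadj
    · exact h.second_ne_of_common_adj i.adj_other (hsame ▸ j.adj_other)
        fun ho => hij (Inc.ext_of_other_eq hsame ho)
    · rw [i.edge_eq, j.edge_eq, Sym2.eq_iff] at hedge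
      rcases hedge with ⟨hsame, ho⟩ | ⟨hi, -⟩
      · exact absurd (Inc.ext_of_other_eq hsame ho) hij
      · rw [← hi]
        exact (h.second_ne i.adj_other).symm
    · rw [i.edge_eq, Sym2.congr_right] at hi
      rw [← hi]
      exact h.second_ne j.adj_other
    · rw [j.edge_eq, Sym2.eq_swap, Sym2.congr_right] at hj
      rw [← hj]
      exact (h.second_ne i.adj_other).symm

lemma isVISColoring_viColoringOf {a f : V → Fin k} (h : IsVIOnePair G a f) :
    IsVISColoring G 1 (viColoringOf a f) := by
  refine ⟨isVIColoring_viColoringOf h, fun v => ?_⟩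
  refine (Set.ncard_le_ncard (t := {f v}) ?_).trans (Set.ncard_singleton _).le
  rintro _ ⟨i, hi, rfl⟩
  exact congrArg f (Inc.mem_I2_iff.1 hi)

lemma IsVIOnePair.of_isVIColoring {a f : V → Fin k} (h : IsVIColoring G (viColoringOf a f)) :
    IsVIOnePair G a f := by
  have second {u w : V} (hu : G.Adj u w) : viColoringOf a f (.inr (Inc.ofAdj hu)) = f w := by
    simp [viColoringOf]
  refine ⟨fun u w huw => h (.inl u) (.inl w) huw, fun u w huw => ?_, fun x u w hu hw huw => ?_,
    fun u w huw => ⟨?_, ?_⟩⟩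
  · rw [← second huw.symm, ← second huw]
    exact h _ _ ⟨fun hi => huw.ne (congrArg (·.1.1) hi).symm, Or.inr (Or.inl Sym2.eq_swap)⟩
  · rw [← second hu, ← second hw]
    refine h _ _ ⟨fun hi => huw ?_, Or.inl rfl⟩
    exact Sym2.congr_right.1 (congrArg (·.1.2) hi)
  · rw [← second huw]
    exact h (.inl u) _ (Sym2.mem_mk_left u w)
  · rw [← second huw]
    exact h (.inl w) _ (Sym2.mem_mk_right u w)

/-- Without isolated vertices every `I₂(v)` is nonempty, and it carries a single color. -/
lemma exists_eq_viColoringOf (hG : ∀ v, ∃ u, G.Adj u v) {c : VIElem G → Fin k}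
    (hc : IsVISColoring G 1 c) : ∃ f, c = viColoringOf (fun v => c (.inl v)) f := by
  choose u hu using hG
  refine ⟨fun v => c (.inr (Inc.ofAdj (hu v))), funext ?_⟩
  rintro (v | i)
  · rfl
  · exact (Set.ncard_le_one (Set.toFinite _)).1 (hc.2 i.other)
      _ ⟨i, Inc.mem_I2_iff.2 rfl, rfl⟩
      _ ⟨Inc.ofAdj (hu i.other), Inc.mem_I2_iff.2 (Inc.other_ofAdj _), rfl⟩

lemma chiVIS_one_eq_sInf (hG : ∀ v, ∃ u, G.Adj u v) :
    chiVIS G 1 = sInf {k | ∃ a f : V → Fin k, IsVIOnePair G a f} := by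
  rw [chiVIS]
  congr 1
  ext k
  refine ⟨fun ⟨c, hc⟩ => ?_, fun ⟨a, f, h⟩ => ⟨_, isVISColoring_viColoringOf h⟩⟩
  obtain ⟨f, hcf⟩ := exists_eq_viColoringOf hG hc
  exact ⟨_, f, .of_isVIColoring (hcf ▸ hc.1)⟩

end OneColoring

open scoped Fin.CommRing

section Cycle

variable {m k : ℕ}

lemma cycleGraph_adj_iff {u w : Fin (m + 3)} :
    (cycleGraph (m + 3)).Adj u w ↔ w = u + 1 ∨ w = u - 1 := by
  rw [cycleGraph_adj, or_comm, sub_eq_iff_eq_add', sub_eq_iff_eq_add', eq_sub_iff_add_eq,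
    eq_comm (a := u)]

lemma cycleGraph_adj_of_eq_add_one {u w : Fin (m + 3)} (h : w = u + 1) :
    (cycleGraph (m + 3)).Adj u w :=
  cycleGraph_adj_iff.2 (.inl h)

lemma add_two_ne_self (v : Fin (m + 3)) : v + 2 ≠ v := by
  intro h
  have h2 : (2 : Fin (m + 3)) = 0 := by linear_combination h
  simp [Fin.ext_iff, Nat.mod_eq_of_lt (show 2 < m + 3 by omega)] at h2

/-- The constraints of a vi-simultaneous `(k, 1)`-coloring of `C_{m+3}` along the path
`v, v + 1, v + 2`; here `a` colors the vertices and `f v` is the color of `I₂(v)`. -/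
def IsCyclePattern (a f : Fin (m + 3) → Fin k) : Prop :=
  ∀ v, a v ≠ a (v + 1) ∧ f v ≠ f (v + 1) ∧ f v ≠ f (v + 2) ∧
    a (v + 1) ≠ f v ∧ a (v + 1) ≠ f (v + 1) ∧ a (v + 1) ≠ f (v + 2)

instance (a f : Fin (m + 3) → Fin k) : Decidable (IsCyclePattern a f) := by
  unfold IsCyclePattern; infer_instance

lemma IsVIOnePair.isCyclePattern {a f : Fin (m + 3) → Fin k}
    (h : IsVIOnePair (cycleGraph (m + 3)) a f) : IsCyclePattern a f := by
  intro v
  have h01 : (cycleGraph (m + 3)).Adj v (v + 1) := cycleGraph_adj_of_eq_add_one rfl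
  have h12 : (cycleGraph (m + 3)).Adj (v + 1) (v + 2) := cycleGraph_adj_of_eq_add_one (by ring)
  exact ⟨h.vertex_ne h01, h.second_ne h01,
    h.second_ne_of_common_adj h01.symm h12 (add_two_ne_self v).symm,
    (h.vertex_ne_second h01.symm).1, (h.vertex_ne_second h01).2, (h.vertex_ne_second h12).1⟩

lemma IsCyclePattern.isVIOnePair {a f : Fin (m + 3) → Fin k} (h : IsCyclePattern a f) :
    IsVIOnePair (cycleGraph (m + 3)) a f := by
  have ne_of_adj {g : Fin (m + 3) → Fin k} (hg : ∀ v, g v ≠ g (v + 1)) ⦃u w : Fin (m + 3)⦄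
      (huw : (cycleGraph (m + 3)).Adj u w) : g u ≠ g w := by
    rcases cycleGraph_adj_iff.1 huw with rfl | rfl
    · exact hg u
    · simpa using (hg (u - 1)).symm
  have around (v : Fin (m + 3)) : f (v - 1) ≠ f (v + 1) ∧
      a v ≠ f (v - 1) ∧ a v ≠ f v ∧ a v ≠ f (v + 1) := by
    have hv := (h (v - 1)).2.2
    rwa [sub_add_cancel, show v - 1 + 2 = v + 1 by ring] at hv
  refine ⟨ne_of_adj fun v => (h v).1, ne_of_adj fun v => (h v).2.1,
    fun x u w hu hw huw => ?_, fun u w huw => ⟨?_, (around w).2.2.1⟩⟩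
  · rcases cycleGraph_adj_iff.1 hu with rfl | rfl <;>
      rcases cycleGraph_adj_iff.1 hw with rfl | rfl
    · exact absurd rfl huw
    · exact (around x).1.symm
    · exact (around x).1
    · exact absurd rfl huw
  · rcases cycleGraph_adj_iff.1 huw with rfl | rfl
    exacts [(around u).2.2.2, (around u).2.1]

lemma chiVIS_one_cycleGraph : chiVIS (cycleGraph (m + 3)) 1 =
    sInf {k | ∃ a f : Fin (m + 3) → Fin k, IsCyclePattern a f} := by
  rw [chiVIS_one_eq_sInf fun v => ⟨v - 1, cycleGraph_adj_of_eq_add_one (by ring)⟩]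
  congr 1
  ext k
  exact exists₂_congr fun a f => ⟨IsVIOnePair.isCyclePattern, IsCyclePattern.isVIOnePair⟩

lemma IsCyclePattern.four_le {a f : Fin (m + 3) → Fin k} (h : IsCyclePattern a f) : 4 ≤ k := by
  obtain ⟨-, h01, h02, h10, h11, h12⟩ := h 0
  obtain ⟨-, h12', -⟩ := h 1
  rw [one_add_one_eq_two] at h12'
  simp only [zero_add] at h01 h02 h10 h11 h12
  have : [a 1, f 0, f 1, f 2].Nodup := by simp [*]
  simpa using this.length_le_card

lemma IsCyclePattern.six_le {a f : Fin 3 → Fin k} (h : IsCyclePattern (m := 0) a f) :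
    6 ≤ k := by
  have := h 0
  have := h 1
  have := h 2
  have : [a 0, a 1, a 2, f 0, f 1, f 2].Nodup := by
    simp only [List.nodup_cons, List.mem_cons, List.not_mem_nil]
    grind
  simpa using this.length_le_card

lemma fin_four_eq_of_avoid {p q r x y : Fin 4} (hpq : p ≠ q) (hpr : p ≠ r) (hqr : q ≠ r)
    (hx : x ≠ p ∧ x ≠ q ∧ x ≠ r) (hy : y ≠ p ∧ y ≠ q ∧ y ≠ r) : x = y := by
  omega

lemma IsCyclePattern.apply_ne_apply_add_three {a f : Fin (m + 3) → Fin 4}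
    (h : IsCyclePattern a f) (v : Fin (m + 3)) : f v ≠ f (v + 3) := by
  intro hv
  obtain ⟨-, h01, h02, h10, h11, h12⟩ := h v
  obtain ⟨ha, h12', -, h21, h22, h23⟩ := h (v + 1)
  ring_nf at hv h01 h02 h10 h11 h12 ha h12' h21 h22 h23
  rw [← hv] at h23
  exact ha (fin_four_eq_of_avoid h01 h02 h12' ⟨h10, h11, h12⟩ ⟨h23, h21, h22⟩)

lemma IsCyclePattern.periodic_four {a f : Fin (m + 3) → Fin 4} (h : IsCyclePattern a f) :
    Function.Periodic f 4 := by
  intro v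
  obtain ⟨-, h01, h02, -⟩ := h v
  obtain ⟨-, h12, h13, -⟩ := h (v + 1)
  obtain ⟨-, h23, h24, -⟩ := h (v + 2)
  obtain ⟨-, h34, -⟩ := h (v + 3)
  have h03 := h.apply_ne_apply_add_three v
  have h14 := h.apply_ne_apply_add_three (v + 1)
  ring_nf at h01 h02 h12 h13 h23 h24 h34 h03 h14 ⊢
  exact fin_four_eq_of_avoid h12 h13 h23 ⟨h14.symm, h24.symm, h34.symm⟩ ⟨h01, h02, h03⟩

lemma IsCyclePattern.five_le (hn : (m + 3) % 4 ≠ 0) {a f : Fin (m + 3) → Fin k}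
    (h : IsCyclePattern a f) : 5 ≤ k := by
  obtain hk | rfl := h.four_le.lt_or_eq
  · exact hk
  exfalso
  have hzero : (((m + 3) % 4 : ℕ) : Fin (m + 3)) + ((m + 3) / 4 : ℕ) * 4 = 0 := by
    have e : (((m + 3) % 4 + 4 * ((m + 3) / 4) : ℕ) : Fin (m + 3)) = 0 := by
      rw [Nat.mod_add_div, Fin.natCast_self]
    push_cast at e
    linear_combination e
  have hr := h.periodic_four.nat_mul ((m + 3) / 4) (((m + 3) % 4 : ℕ) : Fin (m + 3))
  rw [hzero] at hr
  obtain ⟨-, h01, h02, -⟩ := h 0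
  have h03 := h.apply_ne_apply_add_three 0
  rw [zero_add] at h01 h02 h03
  obtain h1 | h2 | h3 : (m + 3) % 4 = 1 ∨ (m + 3) % 4 = 2 ∨ (m + 3) % 4 = 3 := by omega
  · rw [h1, Nat.cast_one] at hr
    exact h01 hr
  · rw [h2, Nat.cast_ofNat] at hr
    exact h02 hr
  · rw [h3, Nat.cast_ofNat] at hr
    exact h03 hr

lemma isCyclePattern_of_forall_ne_add {f : Fin (m + 3) → Fin k}
    (hf : ∀ v, f v ≠ f (v + 1) ∧ f v ≠ f (v + 2) ∧ f v ≠ f (v + 3)) :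
    IsCyclePattern (fun v => f (v + 2)) f := by
  intro v
  obtain ⟨h01, h02, h03⟩ := hf v
  obtain ⟨-, h13, -⟩ := hf (v + 1)
  obtain ⟨h23, -⟩ := hf (v + 2)
  ring_nf at h01 h02 h03 h13 h23 ⊢
  exact ⟨h23, h01, h02, h03.symm, h13.symm, h23.symm⟩

lemma forall_ne_add_of_nat (hm : 1 ≤ m) {F : ℕ → Fin k}
    (hF : ∀ i i' j, i < m + 3 → i' < m + 3 → 1 ≤ j → j ≤ 3 →
      (i' = i + j ∨ i' + (m + 3) = i + j) → F i ≠ F i') (v : Fin (m + 3)) :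
    F v ≠ F ↑(v + 1) ∧ F v ≠ F ↑(v + 2) ∧ F v ≠ F ↑(v + 3) := by
  have shift (j : Fin (m + 3)) (hj : j.val = 1 ∨ j.val = 2 ∨ j.val = 3) :
      F v ≠ F ↑(v + j) := by
    refine hF _ _ j v.isLt (v + j).isLt (by omega) (by omega) ?_
    rw [Fin.val_add_eq_ite]
    split_ifs <;> omega
  refine ⟨shift 1 ?_, shift 2 ?_, shift 3 ?_⟩
  · simp
  · simp [Nat.mod_eq_of_lt (show 2 < m + 3 by omega)]
  · simp [Nat.mod_eq_of_lt (show 3 < m + 3 by omega)]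

lemma exists_isCyclePattern_four (hn : (m + 3) % 4 = 0) :
    ∃ a f : Fin (m + 3) → Fin 4, IsCyclePattern a f := by
  refine ⟨_, _, isCyclePattern_of_forall_ne_add (forall_ne_add_of_nat (F := fun i => (i : Fin 4))
    (by omega) fun i i' j _ _ _ _ hij => ?_)⟩
  rw [Ne, Fin.ext_iff, Fin.val_natCast, Fin.val_natCast]
  omega

/-- The word `0123 … 0123` followed by `n % 4` copies of `01234`; its length is right because
`n ≡ 5 (n % 4) [MOD 4]`. -/
def blockColor (n i : ℕ) : Fin 5 :=
  ((if i < n - 5 * (n % 4) then i % 4 else (i - (n - 5 * (n % 4))) % 5 : ℕ) : Fin 5)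

lemma blockColor_ne {n i i' j : ℕ} (hn : 5 * (n % 4) ≤ n) (hi : i < n)
    (hj : 1 ≤ j) (hj' : j ≤ 3) (hij : i' = i + j ∨ i' + n = i + j) :
    blockColor n i ≠ blockColor n i' := by
  rw [Ne, Fin.ext_iff, blockColor, blockColor, Fin.val_natCast, Fin.val_natCast]
  split_ifs <;> omega

lemma exists_isCyclePattern_five (hm : m ≠ 0) (hn : (m + 3) % 4 ≠ 0) :
    ∃ a f : Fin (m + 3) → Fin 5, IsCyclePattern a f := by
  by_cases hle : 5 * ((m + 3) % 4) ≤ m + 3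
  · exact ⟨_, _, isCyclePattern_of_forall_ne_add (forall_ne_add_of_nat (by omega)
      fun _ _ _ hi _ hj hj' hij => blockColor_ne hle hi hj hj' hij)⟩
  -- For `n = 6, 7, 11` four cyclically consecutive vertices cannot always get distinct colors
  -- out of five.
  obtain rfl | rfl | rfl : m = 3 ∨ m = 4 ∨ m = 8 := by omega
  · exact ⟨![4, 2, 4, 1, 0, 1], ![0, 1, 3, 2, 4, 3], by decide⟩
  · exact ⟨![2, 3, 4, 0, 1, 0, 1], ![0, 1, 2, 3, 4, 2, 3], by decide⟩
  · exact ⟨![2, 3, 0, 1, 2, 3, 4, 0, 1, 0, 1], ![0, 1, 2, 3, 0, 1, 2, 3, 4, 2, 3], by decide⟩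

end Cycle

/-- For the cycle `C_n` on `n ≥ 3` vertices: `χ_{vi,1}(C_3) = 6`;
`χ_{vi,1}(C_n) = 4` if `4 ∣ n`; and `χ_{vi,1}(C_n) = 5` otherwise. -/
theorem chiVIS_one_cycle (n : ℕ) (hn : 3 ≤ n) :
    chiVIS (SimpleGraph.cycleGraph n) 1 =
      if n = 3 then 6 else if n % 4 = 0 then 4 else 5 := by
  obtain ⟨m, rfl⟩ : ∃ m, n = m + 3 := ⟨n - 3, by omega⟩
  rw [chiVIS_one_cycleGraph]
  split_ifs with h3 h4
  · obtain rfl : m = 0 := by omega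
    exact IsLeast.csInf_eq
      ⟨⟨![0, 1, 2], ![3, 4, 5], by decide⟩, fun k ⟨a, f, h⟩ => h.six_le⟩
  · exact IsLeast.csInf_eq ⟨exists_isCyclePattern_four h4, fun k ⟨a, f, h⟩ => h.four_le⟩
  · exact IsLeast.csInf_eq
      ⟨exists_isCyclePattern_five (by omega) h4, fun k ⟨a, f, h⟩ => h.five_le h4⟩
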